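/- arXiv:1912.01693 — 4 statements merged into one kernel-verified Lean document; each statement's English description precedes it below -/
import Mathlib

section
/- If N_δ i.i.d. samples δ_1,...,δ_{N_δ} are drawn from a probability distribution P on Δ, and h* = max_{i=1,...,N_δ} f(δ_i) for a measurable function f : Δ → ℝ, then for any ε ∈ (0,1), the probability (over the N_δ samples) that P{δ : f(δ) > h*} > ε is at most (1-ε)^{N_δ}. -/
/-!
The levels `t` with `P {f > t} > ε` form a lower set `A`. If `h* ∈ A` then every sample lies in
`f ⁻¹' A`, an event of probability `P (f ⁻¹' A) ^ N`. By inner regularity of the law of `f`,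
`P (f ⁻¹' A)` is a supremum of values `P {f ≤ t}` with `t ∈ A`, each of which is at most `1 - ε`.
-/

open MeasureTheory Set

-- A compact subset of `A` lies below its own maximum, which is a point of `A`.
theorem MeasurableSet.measure_le_of_forall_measure_Iic_le {α : Type*} [LinearOrder α]
    [TopologicalSpace α] [ClosedIciTopology α] [MeasurableSpace α] {μ : Measure α}
    [μ.InnerRegular] {A : Set α} (hA : MeasurableSet A) {c : ENNReal}
    (h : ∀ t ∈ A, μ (Iic t) ≤ c) : μ A ≤ c := by
  rw [hA.measure_eq_iSup_isCompact μ]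
  refine iSup₂_le fun K hKA => iSup_le fun hK => ?_
  rcases K.eq_empty_or_nonempty with rfl | hK_ne
  · simp
  obtain ⟨t, htK, hKt⟩ := hK.exists_isGreatest hK_ne
  exact (measure_mono fun _ hs => hKt hs).trans (h t (hKA htK))

/-- Scenario guarantee, d = 1: the probability (over N i.i.d. samples) that the
violation probability of `h* = max_i f(δ_i)` exceeds `ε` is at most `(1-ε)^N`. -/
theorem scenario_bound_max
    {Δ : Type*} [MeasurableSpace Δ] (P : Measure Δ) [IsProbabilityMeasure P]
    (f : Δ → ℝ) (hf : Measurable f) (N : ℕ) (hN : 0 < N)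
    (ε : ℝ) (hε : ε ∈ Set.Ioo (0 : ℝ) 1) :
    (Measure.pi (fun _ : Fin N => P))
      {ω : Fin N → Δ |
        ENNReal.ofReal ε <
          P {δ | f δ > Finset.univ.sup' (Finset.univ_nonempty_iff.mpr ⟨⟨0, hN⟩⟩)
              (fun i => f (ω i))}}
      ≤ ENNReal.ofReal ((1 - ε) ^ N) := by
  set A : Set ℝ := {t | ENNReal.ofReal ε < P {δ | f δ > t}}
  have hA : IsLowerSet A := fun t s hst ht =>
    ht.trans_le (measure_mono fun _ hδ => hst.trans_lt hδ)
  have hA_meas : MeasurableSet A := hA.ordConnected.measurableSet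
  have h_Iic : ∀ t ∈ A, P.map f (Iic t) ≤ ENNReal.ofReal (1 - ε) := fun t ht => by
    have h_compl : f ⁻¹' Iic t = {δ | f δ > t}ᶜ := by ext; simp
    rw [Measure.map_apply hf measurableSet_Iic, h_compl,
      prob_compl_eq_one_sub (measurableSet_lt measurable_const hf),
      ENNReal.ofReal_sub _ hε.1.le, ENNReal.ofReal_one]
    exact tsub_le_tsub_left ht.le 1
  have h_A : P (f ⁻¹' A) ≤ ENNReal.ofReal (1 - ε) := by
    rw [← Measure.map_apply hf hA_meas]
    exact hA_meas.measure_le_of_forall_measure_Iic_le h_Iic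
  calc _ ≤ Measure.pi (fun _ : Fin N => P) (univ.pi fun _ => f ⁻¹' A) :=
        measure_mono fun ω hω i _ => hA (Finset.le_sup' (fun j => f (ω j)) (Finset.mem_univ i)) hω
    _ = P (f ⁻¹' A) ^ N := by simp [Measure.pi_pi]
    _ ≤ ENNReal.ofReal (1 - ε) ^ N := by gcongr
    _ = ENNReal.ofReal ((1 - ε) ^ N) := (ENNReal.ofReal_pow (sub_nonneg.2 hε.2.le) N).symm
end

section
/- Let δ_1,...,δ_N be i.i.d. samples from a distribution P on Δ with f : Δ → ℝ measurable, and let h_* = min_{i=1,...,N} f(δ_i). Then for any ε ∈ (0,1), with probability at least 1 - (1-ε)^N over the samples, P{δ : f(δ) < h_*} ≤ ε. -/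
/-!
Let `t` be an `ε`-quantile of `f` under `P`, i.e. `P {f < t} ≤ ε ≤ P {f ≤ t}`. As soon as one
sample satisfies `f (δ i) ≤ t`, the sampled minimum is at most `t`, so `P {f < h_*} ≤ ε`. Each
sample misses `{f ≤ t}` with probability at most `1 - ε`, so by independence all `N` of them
miss it with probability at most `(1 - ε) ^ N`.
-/

open MeasureTheory Set Filter Topology ENNReal

namespace MeasureTheory

variable {ν : Measure ℝ} {c : ℝ≥0∞} {t : ℝ}

lemma measure_Iio_le_of_forall_lt (h : ∀ x < t, ν (Iio x) ≤ c) : ν (Iio t) ≤ c := by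
  obtain ⟨u, hu_mono, hu_lt, hu_lim⟩ := exists_seq_strictMono_tendsto t
  rw [← (IsLUB.range_of_tendsto (fun n => (hu_lt n).le) hu_lim).iUnion_Iio_eq,
    Monotone.measure_iUnion fun m n hmn => Iio_subset_Iio (hu_mono.monotone hmn)]
  exact iSup_le fun n => h _ (hu_lt n)

lemma le_measure_Iic_of_forall_gt [IsFiniteMeasure ν] (h : ∀ x > t, c ≤ ν (Iio x)) :
    c ≤ ν (Iic t) := by
  obtain ⟨u, hu_anti, hu_gt, hu_lim⟩ := exists_seq_strictAnti_tendsto t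
  have hIic : Iic t = ⋂ n, Iio (u n) := by
    ext x
    simp only [mem_Iic, mem_iInter, mem_Iio]
    exact ⟨fun hx n => hx.trans_lt (hu_gt n), fun hx => ge_of_tendsto' hu_lim fun n => (hx n).le⟩
  rw [hIic, Antitone.measure_iInter (fun m n hmn => Iio_subset_Iio (hu_anti.antitone hmn))
    (fun _ => measurableSet_Iio.nullMeasurableSet) ⟨0, measure_ne_top _ _⟩]
  exact le_iInf fun n => h _ (hu_gt n)

lemma exists_measure_Iio_le_le_measure_Iic [IsFiniteMeasure ν] (hc₀ : 0 < c) (hc : c < ν univ) :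
    ∃ t, ν (Iio t) ≤ c ∧ c ≤ ν (Iic t) := by
  set S := {x | ν (Iio x) ≤ c}
  have hS : S.Nonempty := by
    have hlim : Tendsto (fun x => ν (Iio x)) atBot (𝓝 0) := by
      have hempty : ⋂ x : ℝ, Iio x = ∅ :=
        eq_empty_of_forall_notMem fun x hx => lt_irrefl x (mem_iInter.1 hx x)
      have h := tendsto_measure_iInter_atBot (μ := ν)
        (fun _ => measurableSet_Iio.nullMeasurableSet) monotone_Iio ⟨0, measure_ne_top _ _⟩
      rwa [hempty, measure_empty] at h
    exact ((hlim.eventually (gt_mem_nhds hc₀)).exists).imp fun _ => le_of_lt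
  have hbdd : BddAbove S := by
    obtain ⟨b, hb⟩ := ((tendsto_measure_Iic_atTop ν).eventually (lt_mem_nhds hc)).exists
    refine ⟨b, fun x hx => not_lt.1 fun hbx => ?_⟩
    exact (hb.trans_le (measure_mono (Iic_subset_Iio.2 hbx))).not_ge hx
  refine ⟨sSup S, measure_Iio_le_of_forall_lt fun x hx => ?_,
    le_measure_Iic_of_forall_gt fun x hx => ?_⟩
  · obtain ⟨s, hs, hxs⟩ := exists_lt_of_lt_csSup hS hx
    exact (measure_mono (Iio_subset_Iio hxs.le)).trans hs
  · exact (not_le.1 fun h => (le_csSup hbdd h).not_gt hx).le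

lemma measure_pi_exists_mem {ι Δ : Type*} [Fintype ι] [MeasurableSpace Δ] (P : Measure Δ)
    [IsProbabilityMeasure P] {A : Set Δ} (hA : MeasurableSet A) :
    Measure.pi (fun _ : ι => P) {ω | ∃ i, ω i ∈ A} = 1 - P Aᶜ ^ Fintype.card ι := by
  have hcompl : {ω : ι → Δ | ∃ i, ω i ∈ A} = (univ.pi fun _ => Aᶜ)ᶜ := by
    ext ω
    simp
  rw [hcompl, prob_compl_eq_one_sub (MeasurableSet.univ_pi fun _ => hA.compl), Measure.pi_pi,
    Finset.prod_const, Finset.card_univ]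

end MeasureTheory

/-- Worst-case scenario guarantee: with probability at least `1-(1-ε)^N` over the
samples, the probability that a fresh sample scores strictly below the sampled
minimum `h_* = min_i f(δ_i)` is at most `ε`. -/
theorem scenario_bound_min
    {Δ : Type*} [MeasurableSpace Δ] (P : Measure Δ) [IsProbabilityMeasure P]
    (f : Δ → ℝ) (hf : Measurable f) (N : ℕ) (hN : 0 < N)
    (ε : ℝ) (hε : ε ∈ Set.Ioo (0 : ℝ) 1) :
    ENNReal.ofReal (1 - (1 - ε) ^ N) ≤
      (Measure.pi (fun _ : Fin N => P))
        {ω : Fin N → Δ |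
          P {δ | f δ < Finset.univ.inf' (Finset.univ_nonempty_iff.mpr ⟨⟨0, hN⟩⟩)
              (fun i => f (ω i))} ≤ ENNReal.ofReal ε} := by
  obtain ⟨hε₀, hε₁⟩ := hε
  have : IsProbabilityMeasure (P.map f) := Measure.isProbabilityMeasure_map hf.aemeasurable
  obtain ⟨t, hlt, hle⟩ := exists_measure_Iio_le_le_measure_Iic (ν := P.map f)
    (ofReal_pos.2 hε₀) (by rw [measure_univ]; exact ofReal_lt_one.2 hε₁)
  rw [Measure.map_apply hf measurableSet_Iio] at hlt
  rw [Measure.map_apply hf measurableSet_Iic] at hle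
  have hmiss : P (f ⁻¹' Iic t)ᶜ ≤ ENNReal.ofReal (1 - ε) := by
    rw [prob_compl_eq_one_sub (hf measurableSet_Iic), ofReal_sub _ hε₀.le, ofReal_one]
    exact tsub_le_tsub_left hle 1
  have hhit : {ω : Fin N → Δ | ∃ i, ω i ∈ f ⁻¹' Iic t} ⊆
      {ω | P {δ | f δ < Finset.univ.inf' (Finset.univ_nonempty_iff.mpr ⟨⟨0, hN⟩⟩)
          (fun i => f (ω i))} ≤ ENNReal.ofReal ε} := by
    rintro ω ⟨i, hi⟩
    have hmin : Finset.univ.inf' _ (fun i => f (ω i)) ≤ t :=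
      (Finset.inf'_le (fun i => f (ω i)) (Finset.mem_univ i)).trans hi
    exact (measure_mono fun δ (hδ : f δ < _) => show f δ < t from hδ.trans_le hmin).trans hlt
  calc ENNReal.ofReal (1 - (1 - ε) ^ N)
      = 1 - ENNReal.ofReal (1 - ε) ^ N := by
        rw [ofReal_sub _ (pow_nonneg (by linarith) N), ofReal_one, ofReal_pow (by linarith)]
    _ ≤ 1 - P (f ⁻¹' Iic t)ᶜ ^ N := by gcongr
    _ = Measure.pi (fun _ : Fin N => P) {ω | ∃ i, ω i ∈ f ⁻¹' Iic t} := by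
        rw [measure_pi_exists_mem P (hf measurableSet_Iic), Fintype.card_fin]
    _ ≤ _ := measure_mono hhit
end

section
/- Under the same hypotheses (ζ 1-Lipschitz, ‖W_x‖ = ρ < 1), the system x(k+1) = ζ(W_x x(k) + W_u u(k) + W_y y(k)) is incrementally input-to-state stable: for two trajectories x_a, x_b driven by inputs (u_a, y_a) and (u_b, y_b) respectively, ‖x_a(k) - x_b(k)‖ ≤ ρ^k ‖x_a(0) - x_b(0)‖ + (1/(1-ρ)) · ( ‖W_u‖ · sup_{j<k} ‖u_a(j) - u_b(j)‖ + ‖W_y‖ · sup_{j<k} ‖y_a(j) - y_b(j)‖ ). -/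
/-!
The error `eₖ = ‖x_a(k) - x_b(k)‖` obeys `eₖ₊₁ ≤ ρ eₖ + βₖ₊₁`, because ζ is 1-Lipschitz and the
pre-activation difference is linear in the state and input differences; here `βₖ` is the
non-decreasing worst-case input contribution over the first `k` steps. Unrolling this recursion
gives `eₖ ≤ ρᵏ e₀ + βₖ (1 + ρ + ρ² + ⋯) ≤ ρᵏ e₀ + βₖ / (1 - ρ)`.
-/

section StepBound

variable {𝕜 E U Y : Type*} [NontriviallyNormedField 𝕜]
  [SeminormedAddCommGroup E] [NormedSpace 𝕜 E] [SeminormedAddCommGroup U] [NormedSpace 𝕜 U]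
  [SeminormedAddCommGroup Y] [NormedSpace 𝕜 Y]

theorem LipschitzWith.norm_comp_linear_add₃_sub_le {ζ : E → E} (hζ : LipschitzWith 1 ζ)
    (Wx : E →L[𝕜] E) (Wu : U →L[𝕜] E) (Wy : Y →L[𝕜] E) (x x' : E) (u u' : U) (y y' : Y) :
    ‖ζ (Wx x + Wu u + Wy y) - ζ (Wx x' + Wu u' + Wy y')‖ ≤
      ‖Wx‖ * ‖x - x'‖ + ‖Wu‖ * ‖u - u'‖ + ‖Wy‖ * ‖y - y'‖ :=
  calc ‖ζ (Wx x + Wu u + Wy y) - ζ (Wx x' + Wu u' + Wy y')‖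
      ≤ ‖(Wx x + Wu u + Wy y) - (Wx x' + Wu u' + Wy y')‖ := by
        simpa [dist_eq_norm] using hζ.dist_le_mul (Wx x + Wu u + Wy y) (Wx x' + Wu u' + Wy y')
    _ = ‖Wx (x - x') + Wu (u - u') + Wy (y - y')‖ := by simp only [map_sub]; abel_nf
    _ ≤ ‖Wx (x - x')‖ + ‖Wu (u - u')‖ + ‖Wy (y - y')‖ := norm_add₃_le
    _ ≤ ‖Wx‖ * ‖x - x'‖ + ‖Wu‖ * ‖u - u'‖ + ‖Wy‖ * ‖y - y'‖ := by
        gcongr <;> exact ContinuousLinearMap.le_opNorm _ _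

end StepBound

section RunningSup

variable {f : ℕ → ℝ}

theorem monotone_iSup_fin (hf : ∀ j, 0 ≤ f j) : Monotone fun k => ⨆ j : Fin k, f j :=
  fun _ _ hkl => Real.iSup_le
    (fun j => le_ciSup (f := fun i : Fin _ => f i) (Set.finite_range _).bddAbove (Fin.castLE hkl j))
    (Real.iSup_nonneg fun _ => hf _)

theorem le_iSup_fin_succ (k : ℕ) : f k ≤ ⨆ j : Fin (k + 1), f j :=
  le_ciSup (f := fun j : Fin (k + 1) => f j) (Set.finite_range _).bddAbove (Fin.last k)

end RunningSup

theorem le_pow_mul_add_of_le_mul_add {e β : ℕ → ℝ} {ρ : ℝ} (hρ0 : 0 ≤ ρ) (hρ1 : ρ < 1)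
    (hβ : Monotone β) (hβ0 : 0 ≤ β 0) (he : ∀ k, e (k + 1) ≤ ρ * e k + β (k + 1)) :
    ∀ k, e k ≤ ρ ^ k * e 0 + 1 / (1 - ρ) * β k := by
  have hgeom : ρ * (1 / (1 - ρ)) + 1 = 1 / (1 - ρ) := by
    field_simp [(sub_pos.2 hρ1).ne']
    ring
  intro k
  induction k with
  | zero => simpa using mul_nonneg (one_div_nonneg.2 (sub_pos.2 hρ1).le) hβ0
  | succ k ih =>
    calc e (k + 1) ≤ ρ * e k + β (k + 1) := he k
      _ ≤ ρ * (ρ ^ k * e 0 + 1 / (1 - ρ) * β (k + 1)) + β (k + 1) := by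
        gcongr
        calc e k ≤ ρ ^ k * e 0 + 1 / (1 - ρ) * β k := ih
          _ ≤ ρ ^ k * e 0 + 1 / (1 - ρ) * β (k + 1) := by
            gcongr
            exact hβ k.le_succ
      _ = ρ ^ (k + 1) * e 0 + 1 / (1 - ρ) * β (k + 1) := by
        linear_combination β (k + 1) * hgeom

theorem esn_deltaISS_general
    {n nu ny : ℕ}
    (ζ : EuclideanSpace ℝ (Fin n) → EuclideanSpace ℝ (Fin n))
    (hζ : LipschitzWith 1 ζ)
    (Wx : EuclideanSpace ℝ (Fin n) →L[ℝ] EuclideanSpace ℝ (Fin n))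
    (Wu : EuclideanSpace ℝ (Fin nu) →L[ℝ] EuclideanSpace ℝ (Fin n))
    (Wy : EuclideanSpace ℝ (Fin ny) →L[ℝ] EuclideanSpace ℝ (Fin n))
    (ρ : ℝ) (hρ : ρ = ‖Wx‖) (hρ1 : ρ < 1)
    (ua ub : ℕ → EuclideanSpace ℝ (Fin nu)) (ya yb : ℕ → EuclideanSpace ℝ (Fin ny))
    (xa xb : ℕ → EuclideanSpace ℝ (Fin n))
    (ha : ∀ k, xa (k + 1) = ζ (Wx (xa k) + Wu (ua k) + Wy (ya k)))
    (hb : ∀ k, xb (k + 1) = ζ (Wx (xb k) + Wu (ub k) + Wy (yb k))) :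
    ∀ k, ‖xa k - xb k‖ ≤ ρ ^ k * ‖xa 0 - xb 0‖ +
      (1 / (1 - ρ)) *
        (‖Wu‖ * (⨆ j : Fin k, ‖ua j - ub j‖) +
         ‖Wy‖ * (⨆ j : Fin k, ‖ya j - yb j‖)) := by
  have hρ0 : 0 ≤ ρ := hρ ▸ norm_nonneg Wx
  refine le_pow_mul_add_of_le_mul_add hρ0 hρ1 ?mono (by simp [Real.iSup_of_isEmpty]) ?step
  case mono =>
    have hsup {m : ℕ} (v w : ℕ → EuclideanSpace ℝ (Fin m)) :=
      monotone_iSup_fin (f := fun j => ‖v j - w j‖) fun _ => norm_nonneg _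
    exact ((hsup ua ub).const_mul (norm_nonneg Wu)).add ((hsup ya yb).const_mul (norm_nonneg Wy))
  case step =>
    intro k
    rw [ha, hb, hρ, ← add_assoc]
    refine (hζ.norm_comp_linear_add₃_sub_le Wx Wu Wy _ _ _ _ _ _).trans ?_
    gcongr
    · exact le_iSup_fin_succ (f := fun j => ‖ua j - ub j‖) k
    · exact le_iSup_fin_succ (f := fun j => ‖ya j - yb j‖) k

/-- δISS of the ESN state equation: trajectories driven by different inputs satisfy
an incremental input-to-state stability bound with contraction factor `ρ = ‖W_x‖`. -/
theorem esn_deltaISS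
    {n nu ny : ℕ}
    (ζ : EuclideanSpace ℝ (Fin n) → EuclideanSpace ℝ (Fin n))
    (hζ : LipschitzWith 1 ζ)
    (Wx : EuclideanSpace ℝ (Fin n) →L[ℝ] EuclideanSpace ℝ (Fin n))
    (Wu : EuclideanSpace ℝ (Fin nu) →L[ℝ] EuclideanSpace ℝ (Fin n))
    (Wy : EuclideanSpace ℝ (Fin ny) →L[ℝ] EuclideanSpace ℝ (Fin n))
    (ρ : ℝ) (hρ : ρ = ‖Wx‖) (hρ1 : ρ < 1)
    (ua ub : ℕ → EuclideanSpace ℝ (Fin nu)) (ya yb : ℕ → EuclideanSpace ℝ (Fin ny))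
    (hu : BddAbove (Set.range fun j => ‖ua j - ub j‖))
    (hy : BddAbove (Set.range fun j => ‖ya j - yb j‖))
    (xa xb : ℕ → EuclideanSpace ℝ (Fin n))
    (ha : ∀ k, xa (k + 1) = ζ (Wx (xa k) + Wu (ua k) + Wy (ya k)))
    (hb : ∀ k, xb (k + 1) = ζ (Wx (xb k) + Wu (ub k) + Wy (yb k))) :
    ∀ k, ‖xa k - xb k‖ ≤ ρ ^ k * ‖xa 0 - xb 0‖ +
      (1 / (1 - ρ)) *
        (‖Wu‖ * (⨆ j : Fin k, ‖ua j - ub j‖) +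
         ‖Wy‖ * (⨆ j : Fin k, ‖ya j - yb j‖)) :=
  esn_deltaISS_general ζ hζ Wx Wu Wy ρ hρ hρ1 ua ub ya yb xa xb ha hb
end

section
/- Suppose the ESN state map F(x, k) = ζ(W_x x + W_u u(k) + W_y y(k)) is a ρ-contraction in x (ρ < 1) for each k, with inputs u, y defined for all k ∈ ℤ and uniformly bounded, and ζ maps into a bounded set. Then there exists a unique bounded bi-infinite trajectory (x̄(k))_{k ∈ ℤ} satisfying x̄(k+1) = F(x̄(k), k), and every forward trajectory started at any initial condition converges to it: ‖x(k) - x̄(k)‖ ≤ ρ^k ‖x(0) - x̄(0)‖. -/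
open Bornology BoundedContinuousFunction

set_option maxHeartbeats 800000

/-- Echo state property: with a 1-Lipschitz bounded activation and `‖W_x‖ < 1`,
there is a unique bounded bi-infinite trajectory of the ESN state equation, and
every forward trajectory converges to it geometrically. -/
theorem echo_state_property
    {n nu ny : ℕ}
    (ζ : EuclideanSpace ℝ (Fin n) → EuclideanSpace ℝ (Fin n))
    (hζ : LipschitzWith 1 ζ) (hζbdd : IsBounded (Set.range ζ))
    (Wx : EuclideanSpace ℝ (Fin n) →L[ℝ] EuclideanSpace ℝ (Fin n))
    (Wu : EuclideanSpace ℝ (Fin nu) →L[ℝ] EuclideanSpace ℝ (Fin n))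
    (Wy : EuclideanSpace ℝ (Fin ny) →L[ℝ] EuclideanSpace ℝ (Fin n))
    (hWx : ‖Wx‖ < 1)
    (u : ℤ → EuclideanSpace ℝ (Fin nu)) (y : ℤ → EuclideanSpace ℝ (Fin ny))
    (hu : IsBounded (Set.range u)) (hy : IsBounded (Set.range y)) :
    let F : EuclideanSpace ℝ (Fin n) → ℤ → EuclideanSpace ℝ (Fin n) :=
      fun x k => ζ (Wx x + Wu (u k) + Wy (y k))
    ∃ xbar : ℤ → EuclideanSpace ℝ (Fin n),
      (IsBounded (Set.range xbar) ∧ ∀ k : ℤ, xbar (k + 1) = F (xbar k) k) ∧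
      (∀ xbar' : ℤ → EuclideanSpace ℝ (Fin n),
        (IsBounded (Set.range xbar') ∧ ∀ k : ℤ, xbar' (k + 1) = F (xbar' k) k) →
        xbar' = xbar) ∧
      (∀ x : ℕ → EuclideanSpace ℝ (Fin n),
        (∀ k : ℕ, x (k + 1) = F (x k) k) →
        ∀ k : ℕ, ‖x k - xbar k‖ ≤ ‖Wx‖ ^ k * ‖x 0 - xbar 0‖) := by
  intro F
  -- F is ‖Wx‖-Lipschitz in the state
  have hF : ∀ (a b : EuclideanSpace ℝ (Fin n)) (k : ℤ), dist (F a k) (F b k) ≤ ‖Wx‖ * dist a b := by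
    intro a b k
    show dist (ζ (Wx a + Wu (u k) + Wy (y k))) (ζ (Wx b + Wu (u k) + Wy (y k))) ≤ ‖Wx‖ * dist a b
    have h := hζ.dist_le_mul (Wx a + Wu (u k) + Wy (y k)) (Wx b + Wu (u k) + Wy (y k))
    rw [NNReal.coe_one, one_mul] at h
    refine h.trans ?_
    have e : (Wx a + Wu (u k) + Wy (y k)) - (Wx b + Wu (u k) + Wy (y k)) = Wx (a - b) := by
      rw [map_sub]; abel
    rw [dist_eq_norm, e, dist_eq_norm]
    exact Wx.le_opNorm _
  -- values of F are uniformly bounded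
  obtain ⟨C, hC⟩ := Metric.isBounded_iff.1 hζbdd
  have hFC : ∀ (a b : EuclideanSpace ℝ (Fin n)) (j k : ℤ), dist (F a j) (F b k) ≤ C := fun a b j k =>
    hC ⟨_, rfl⟩ ⟨_, rfl⟩
  -- the shift-and-apply map on bounded functions BoundedContinuousFunction ℤ (EuclideanSpace ℝ (Fin n))
  let T : (BoundedContinuousFunction ℤ (EuclideanSpace ℝ (Fin n))) → (BoundedContinuousFunction ℤ (EuclideanSpace ℝ (Fin n))) := fun f =>
    ⟨⟨fun k => F (f (k - 1)) (k - 1), continuous_of_discreteTopology⟩,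
      ⟨C, fun a b => hFC _ _ _ _⟩⟩
  have hT : ContractingWith ‖Wx‖₊ T := by
    constructor
    · exact_mod_cast hWx
    · refine LipschitzWith.of_dist_le_mul fun f g => ?_
      rw [coe_nnnorm]
      refine (BoundedContinuousFunction.dist_le
        (mul_nonneg (norm_nonneg _) dist_nonneg)).2 fun k => ?_
      calc dist (F (f (k - 1)) (k - 1)) (F (g (k - 1)) (k - 1))
          ≤ ‖Wx‖ * dist (f (k - 1)) (g (k - 1)) := hF _ _ _
        _ ≤ ‖Wx‖ * dist f g := by
            exact mul_le_mul_of_nonneg_left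
              (BoundedContinuousFunction.dist_coe_le_dist _) (norm_nonneg _)
  let xb : BoundedContinuousFunction ℤ (EuclideanSpace ℝ (Fin n)) := hT.fixedPoint T
  have hfix : T xb = xb := hT.fixedPoint_isFixedPt
  have hrec : ∀ k : ℤ, xb (k + 1) = F (xb k) k := by
    intro k
    conv_lhs => rw [← hfix]
    show F (xb (k + 1 - 1)) (k + 1 - 1) = F (xb k) k
    simp
  refine ⟨fun k => xb k, ⟨xb.isBounded_range, hrec⟩, ?_, ?_⟩
  · -- uniqueness
    rintro x' ⟨hx'b, hx'rec⟩
    obtain ⟨C', hC'⟩ := Metric.isBounded_iff.1 hx'b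
    let g : BoundedContinuousFunction ℤ (EuclideanSpace ℝ (Fin n)) := ⟨⟨x', continuous_of_discreteTopology⟩,
      ⟨C', fun a b => hC' ⟨_, rfl⟩ ⟨_, rfl⟩⟩⟩
    have hg : Function.IsFixedPt T g := by
      apply BoundedContinuousFunction.ext
      intro k
      show F (x' (k - 1)) (k - 1) = x' k
      have h := hx'rec (k - 1)
      rw [sub_add_cancel] at h
      exact h.symm
    have : g = xb := hT.fixedPoint_unique hg
    funext k
    exact congrArg (fun h : BoundedContinuousFunction ℤ (EuclideanSpace ℝ (Fin n)) => h k) this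
  · -- forward convergence
    intro x hx k
    induction k with
    | zero =>
      show ‖x 0 - xb (0 : ℤ)‖ ≤ ‖Wx‖ ^ 0 * ‖x 0 - xb (0 : ℤ)‖
      rw [pow_zero, one_mul]
    | succ k ih =>
      show ‖x (k + 1) - xb ((k + 1 : ℕ) : ℤ)‖ ≤ ‖Wx‖ ^ (k + 1) * ‖x 0 - xb (0 : ℤ)‖
      have h1 : x (k + 1) = F (x k) (k : ℤ) := hx k
      have h2 : xb ((k + 1 : ℕ) : ℤ) = F (xb (k : ℤ)) (k : ℤ) := by
        have h := hrec (k : ℤ)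
        rw [show ((k + 1 : ℕ) : ℤ) = (k : ℤ) + 1 by push_cast; ring]
        exact h
      rw [h1, h2]
      calc ‖F (x k) (k : ℤ) - F (xb (k : ℤ)) (k : ℤ)‖
          = dist (F (x k) (k : ℤ)) (F (xb (k : ℤ)) (k : ℤ)) := (dist_eq_norm _ _).symm
        _ ≤ ‖Wx‖ * dist (x k) (xb (k : ℤ)) := hF _ _ _
        _ = ‖Wx‖ * ‖x k - xb (k : ℤ)‖ := by rw [dist_eq_norm]
        _ ≤ ‖Wx‖ * (‖Wx‖ ^ k * ‖x 0 - xb (0 : ℤ)‖) :=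
            mul_le_mul_of_nonneg_left ih (norm_nonneg _)
        _ = ‖Wx‖ ^ (k + 1) * ‖x 0 - xb (0 : ℤ)‖ := by ring
end
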